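/- Suppose the matrices M_1,…,M_r satisfy conditions (H1a), (H1b) and (H1c). Let 1 ≤ j ≤ r, let w ∈ W_m, and let a ∈ A satisfy M_j(a, t(w)) = 1. Then there exists a unique word v ∈ W_{m+e_j} such that v|[0,m] = w and t(v) = a. -/

import Mathlib

/-!
The new layer sits over the top face `F = {l ∈ [0,m] | l j = m j}` of the box and is filled in
downwards from the letter `a` over the corner `m`. For `l ∈ F` and a direction `i` with
`l + e i ∈ F`, commutativity turns the path `w l →ᵢ w (l + e i) →ⱼ c`, where `c` is the letter over
`l + e i`, into a path `w l →ⱼ d →ᵢ c`, and (H1b) makes `d` unique. This gives uniqueness, and it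
defines the layer once one such direction `i` is chosen at each `l`. The transitions in the other
directions `i'` then come from (H1c): in the cube spanned by `e j, e i', e i` at `l`, the paths
`w l →ⱼ · →ᵢ' · →ᵢ t` and `w l →ᵢ' · →ⱼ · →ᵢ t` to the letter `t` over the far corner are counted
by one entry of `M i * M i' * M j`, so they share their third letter.
-/

open Matrix

variable {r : ℕ} {A : Type*}

/-- The `j`-th standard basis vector of `ℤ^r`. -/
def evec (r : ℕ) (j : Fin r) : Fin r → ℤ := fun i => if i = j then 1 else 0

/-- `w` represents a word of shape `m` (only its values on `[0,m]` matter):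
`m ≥ 0` and the transition matrices are respected on the box `[0,m]`. -/
def IsWord (M : Fin r → Matrix A A ℤ) (m : Fin r → ℤ) (w : (Fin r → ℤ) → A) : Prop :=
  0 ≤ m ∧ ∀ (l : Fin r → ℤ) (j : Fin r), 0 ≤ l → l + evec r j ≤ m →
    M j (w (l + evec r j)) (w l) = 1

/-- Two representing functions agree on the box `[0,m]`; this is equality of
words of shape `m`. -/
def AgreeOn (m : Fin r → ℤ) (w w' : (Fin r → ℤ) → A) : Prop :=
  ∀ l : Fin r → ℤ, 0 ≤ l → l ≤ m → w l = w' l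

/-- The restriction `w|[k,k+n]`, as a word based at `0`: `(restrictW k w) i = w (i + k)`. -/
def restrictW (k : Fin r → ℤ) (w : (Fin r → ℤ) → A) : (Fin r → ℤ) → A :=
  fun i => w (i + k)

/-- `w` (a word of shape `m`) is `p`-periodic: the translate `τ_p w`, given by
`(τ_p w)(x) = w (x - p)`, agrees with `w` on `[0,m] ∩ [p,p+m]`. -/
def IsPeriodic (p m : Fin r → ℤ) (w : (Fin r → ℤ) → A) : Prop :=
  ∀ x : Fin r → ℤ, 0 ≤ x → x ≤ m → p ≤ x → x ≤ p + m → w (x - p) = w x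

/-- Condition (H0): each `M j` is nonzero. -/
def H0 (M : Fin r → Matrix A A ℤ) : Prop := ∀ j, M j ≠ 0

/-- Condition (H1): unique products of words. -/
def H1 (M : Fin r → Matrix A A ℤ) : Prop :=
  ∀ (m n : Fin r → ℤ) (u v : (Fin r → ℤ) → A),
    IsWord M m u → IsWord M n v → u m = v 0 →
      (∃ w, IsWord M (m + n) w ∧ AgreeOn m w u ∧ AgreeOn n (restrictW m w) v) ∧
      (∀ w w', IsWord M (m + n) w → AgreeOn m w u → AgreeOn n (restrictW m w) v →
        IsWord M (m + n) w' → AgreeOn m w' u → AgreeOn n (restrictW m w') v →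
        AgreeOn (m + n) w w')

/-- Condition (H2): the directed graph on `A` with an edge `a → b` whenever
`M i b a = 1` for some `i` is irreducible. -/
def H2 (M : Fin r → Matrix A A ℤ) : Prop :=
  ∀ a b : A, Relation.ReflTransGen (fun x y => ∃ i, M i y x = 1) a b

/-- Condition (H3): for each nonzero `p ∈ ℤ^r` there is a non-`p`-periodic word. -/
def H3 (M : Fin r → Matrix A A ℤ) : Prop :=
  ∀ p : Fin r → ℤ, p ≠ 0 → ∃ (m : Fin r → ℤ) (w : (Fin r → ℤ) → A),
    IsWord M m w ∧ ¬ IsPeriodic p m w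

/-- Condition (H1a): the matrices commute. -/
def H1a [Fintype A] (M : Fin r → Matrix A A ℤ) : Prop :=
  ∀ i j, M i * M j = M j * M i

/-- Condition (H1b): for `i < j`, the entries of `M i * M j` lie in `{0,1}`. -/
def H1b [Fintype A] (M : Fin r → Matrix A A ℤ) : Prop :=
  ∀ i j, i < j → ∀ a b : A, (M i * M j) b a = 0 ∨ (M i * M j) b a = 1

/-- Condition (H1c): for `i < j < k`, the entries of `M i * M j * M k` lie in `{0,1}`. -/
def H1c [Fintype A] (M : Fin r → Matrix A A ℤ) : Prop :=
  ∀ i j k, i < j → j < k → ∀ a b : A,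
    (M i * M j * M k) b a = 0 ∨ (M i * M j * M k) b a = 1

/-- Condition (H3*). -/
def H3star (M : Fin r → Matrix A A ℤ) : Prop :=
  ∀ (j : Fin r) (m : Fin r → ℤ), m j = 0 → ∀ w : (Fin r → ℤ) → A, IsWord M m w →
    ∃ u u', IsWord M (m + evec r j) u ∧ IsWord M (m + evec r j) u' ∧
      AgreeOn m u w ∧ AgreeOn m u' w ∧ u (evec r j) ≠ u' (evec r j)

/-- `x` represents the product word `uv` of `u ∈ W_m` and `v ∈ W_n`. -/
def IsProd (M : Fin r → Matrix A A ℤ) (m n : Fin r → ℤ)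
    (u v x : (Fin r → ℤ) → A) : Prop :=
  IsWord M (m + n) x ∧ AgreeOn m x u ∧ AgreeOn n (restrictW m x) v


section NonnegMatrices

variable [Fintype A] {P Q : Matrix A A ℤ}

lemma one_le_mul_apply (hP : ∀ a b, 0 ≤ P a b) (hQ : ∀ a b, 0 ≤ Q a b) {c x b : A}
    (hc : 1 ≤ P c x) (hb : 1 ≤ Q x b) : 1 ≤ (P * Q) c b :=
  calc (1 : ℤ) ≤ P c x * Q x b := one_le_mul_of_one_le_of_one_le hc hb
    _ ≤ (P * Q) c b :=
      Finset.single_le_sum (fun y _ => mul_nonneg (hP c y) (hQ y b)) (Finset.mem_univ x)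

lemma eq_of_mul_apply_le_one (hP : ∀ a b, 0 ≤ P a b) (hQ : ∀ a b, 0 ≤ Q a b) {c b x x' : A}
    (h : (P * Q) c b ≤ 1) (hcx : 1 ≤ P c x) (hxb : 1 ≤ Q x b)
    (hcx' : 1 ≤ P c x') (hx'b : 1 ≤ Q x' b) : x = x' := by
  by_contra hne
  have htwo : P c x * Q x b + P c x' * Q x' b ≤ (P * Q) c b :=
    Finset.add_le_sum (fun y _ => mul_nonneg (hP c y) (hQ y b))
      (Finset.mem_univ x) (Finset.mem_univ x') hne
  nlinarith

end NonnegMatrices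

section Paths

variable {M : Fin r → Matrix A A ℤ} (hM : ∀ j (a b : A), M j b a = 0 ∨ M j b a = 1)

include hM in
lemma entry_nonneg (p : Fin r) (a b : A) : 0 ≤ M p a b := by
  rcases hM p b a with h | h <;> simp [h]

variable [Fintype A]

include hM in
lemma exists_path_swap (h1a : H1a M) {p q : Fin r} {b x c : A}
    (hbx : M q x b = 1) (hxc : M p c x = 1) : ∃ x', M p x' b = 1 ∧ M q c x' = 1 := by
  have hpos : 1 ≤ (M q * M p) c b := by
    rw [← h1a p q]
    exact one_le_mul_apply (entry_nonneg hM p) (entry_nonneg hM q) hxc.ge hbx.ge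
  obtain ⟨x', -, hx'⟩ := Finset.exists_ne_zero_of_sum_ne_zero (s := Finset.univ)
    (f := fun y => M q c y * M p y b) (by rw [← Matrix.mul_apply]; omega)
  obtain ⟨hcx', hx'b⟩ := mul_ne_zero_iff.mp hx'
  exact ⟨x', (hM p b x').resolve_left hx'b, (hM q x' c).resolve_left hcx'⟩

include hM in
lemma path_mid_unique (h1a : H1a M) (h1b : H1b M) {p q : Fin r} (hpq : p ≠ q) {b x x' c : A}
    (hbx : M q x b = 1) (hxc : M p c x = 1) (hbx' : M q x' b = 1) (hx'c : M p c x' = 1) :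
    x = x' := by
  have hle : (M p * M q) c b ≤ 1 := by
    rcases hpq.lt_or_gt with h | h
    · rcases h1b p q h b c with h' | h' <;> omega
    · rw [h1a p q]; rcases h1b q p h b c with h' | h' <;> omega
  exact eq_of_mul_apply_le_one (entry_nonneg hM p) (entry_nonneg hM q) hle
    hxc.ge hbx.ge hx'c.ge hbx'.ge

lemma mul_mul_apply_le_one (h1a : H1a M) (h1c : H1c M) {p q s : Fin r}
    (hpq : p ≠ q) (hps : p ≠ s) (hqs : q ≠ s) (c b : A) : (M p * M q * M s) c b ≤ 1 := by
  have swap₁₂ : ∀ p q s, M p * M q * M s = M q * M p * M s := fun p q s => by rw [h1a p q]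
  have swap₂₃ : ∀ p q s, M p * M q * M s = M p * M s * M q := fun p q s => by
    rw [mul_assoc, h1a q s, ← mul_assoc]
  have sorted : ∀ p q s : Fin r, p < q → q < s → (M p * M q * M s) c b ≤ 1 :=
    fun p q s hpq hqs => by rcases h1c p q s hpq hqs b c with h | h <;> omega
  rcases hpq.lt_or_gt with h₁ | h₁ <;> rcases hps.lt_or_gt with h₂ | h₂ <;>
    rcases hqs.lt_or_gt with h₃ | h₃
  all_goals first
    | omega
    | exact sorted _ _ _ (by assumption) (by assumption)
    | (rw [swap₁₂]; exact sorted _ _ _ (by assumption) (by assumption))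
    | (rw [swap₂₃]; exact sorted _ _ _ (by assumption) (by assumption))
    | (rw [swap₁₂, swap₂₃]; exact sorted _ _ _ (by assumption) (by assumption))
    | (rw [swap₂₃, swap₁₂]; exact sorted _ _ _ (by assumption) (by assumption))
    | (rw [swap₁₂, swap₂₃, swap₁₂]; exact sorted _ _ _ (by assumption) (by assumption))

include hM in
lemma edge_of_cube (h1a : H1a M) (h1c : H1c M) {i j k : Fin r}
    (hij : i ≠ j) (hik : i ≠ k) (hjk : j ≠ k) {b x y₀ yᵢ yₖ t : A}
    (hby₀ : M j y₀ b = 1) (hy₀yₖ : M k yₖ y₀ = 1) (hyₖt : M i t yₖ = 1)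
    (hbx : M i x b = 1) (hxyᵢ : M j yᵢ x = 1) (hyᵢt : M k t yᵢ = 1) : M i yᵢ y₀ = 1 := by
  have hnonneg : ∀ a c, 0 ≤ (M i * M j) a c := fun a c =>
    Finset.sum_nonneg fun y _ => mul_nonneg (entry_nonneg hM i a y) (entry_nonneg hM j y c)
  obtain ⟨d, hy₀d, hdt⟩ := exists_path_swap hM h1a hy₀yₖ hyₖt
  have hd : d = yᵢ := by
    refine eq_of_mul_apply_le_one (entry_nonneg hM k) hnonneg ?_ hdt.ge
      (one_le_mul_apply (entry_nonneg hM i) (entry_nonneg hM j) hy₀d.ge hby₀.ge) hyᵢt.ge ?_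
    · rw [← mul_assoc]; exact mul_mul_apply_le_one h1a h1c hik.symm hjk.symm hij t b
    · rw [h1a i j]
      exact one_le_mul_apply (entry_nonneg hM j) (entry_nonneg hM i) hxyᵢ.ge hbx.ge
  exact hd ▸ hy₀d

end Paths

section Positions

lemma add_evec_apply (l : Fin r → ℤ) (i k : Fin r) :
    (l + evec r i) k = l k + if k = i then 1 else 0 := rfl

def gap (m l : Fin r → ℤ) : ℕ := ∑ i, (m i - l i).toNat

lemma gap_add_evec_lt {m l : Fin r → ℤ} {i : Fin r} (h : l i < m i) :
    gap m (l + evec r i) < gap m l := by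
  refine Finset.sum_lt_sum (fun k _ => ?_) ⟨i, Finset.mem_univ i, ?_⟩
  · rw [add_evec_apply]; split_ifs <;> omega
  · rw [add_evec_apply, if_pos rfl]; omega

theorem induction_down (m : Fin r → ℤ) {P : (Fin r → ℤ) → Prop}
    (step : ∀ l, (∀ i, l i < m i → P (l + evec r i)) → P l) (l : Fin r → ℤ) : P l :=
  (measure (gap m)).wf.induction l fun l ih => step l fun _ hi => ih _ (gap_add_evec_lt hi)

lemma add_evec_le_iff {l m : Fin r → ℤ} (hl : l ≤ m) (i : Fin r) :
    l + evec r i ≤ m ↔ l i < m i := by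
  rw [Pi.le_def] at hl ⊢
  refine ⟨fun h => ?_, fun h k => ?_⟩
  · have := h i; rw [add_evec_apply, if_pos rfl] at this; omega
  · have := hl k; rw [add_evec_apply]; split_ifs with hk <;> [subst hk; skip] <;> omega

lemma add_evec_add_evec_le {l m : Fin r → ℤ} {i k : Fin r} (hik : i ≠ k)
    (hi : l + evec r i ≤ m) (hk : l + evec r k ≤ m) : l + evec r i + evec r k ≤ m := by
  rw [Pi.le_def] at *
  intro n
  have := hi n; have := hk n
  simp only [add_evec_apply] at *
  split_ifs at * <;> subst_vars <;> omega

lemma evec_nonneg (i : Fin r) : 0 ≤ evec r i := fun k => by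
  show (0 : ℤ) ≤ if k = i then 1 else 0
  split_ifs <;> omega

lemma le_of_le_add_evec {x m : Fin r → ℤ} {j : Fin r} (hx : x ≤ m + evec r j)
    (hxj : x j ≤ m j) : x ≤ m := by
  rw [Pi.le_def] at hx ⊢
  intro k
  have := hx k
  rw [add_evec_apply] at this
  split_ifs at this with hk <;> [subst hk; skip] <;> omega

def topFace (m : Fin r → ℤ) (j : Fin r) : Set (Fin r → ℤ) :=
  {l | 0 ≤ l ∧ l ≤ m ∧ l j = m j}

lemma ne_of_add_evec_le {m l : Fin r → ℤ} {i j : Fin r} (hl : l ∈ topFace m j)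
    (hi : l + evec r i ≤ m) : i ≠ j := by
  rintro rfl
  have := (add_evec_le_iff hl.2.1 i).mp hi
  have := hl.2.2; omega

lemma add_evec_mem_topFace {m l : Fin r → ℤ} {i j : Fin r} (hl : l ∈ topFace m j)
    (hi : l + evec r i ≤ m) : l + evec r i ∈ topFace m j := by
  have hij := ne_of_add_evec_le hl hi
  refine ⟨fun k => ?_, hi, ?_⟩
  · have : (0 : ℤ) ≤ l k := hl.1 k
    show (0 : ℤ) ≤ (l + evec r i) k
    rw [add_evec_apply]; split_ifs <;> omega
  · rw [add_evec_apply, if_neg hij.symm, hl.2.2, add_zero]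

lemma sub_evec_mem_topFace {x m : Fin r → ℤ} {j : Fin r} (hm : 0 ≤ m) (hx₀ : 0 ≤ x)
    (hx : x ≤ m + evec r j) (hxj : ¬ x j ≤ m j) : x - evec r j ∈ topFace m j := by
  simp only [topFace, Set.mem_ofPred_eq, Pi.le_def, Pi.zero_apply, Pi.add_apply, Pi.sub_apply,
    evec] at *
  have := hx j
  simp only at this ⊢
  refine ⟨fun k => ?_, fun k => ?_, by omega⟩ <;>
  · have := hx k; have := hm k; have := hx₀ k
    split_ifs at * with hk <;> [subst hk; skip] <;> omega

end Positions

section TopLayer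

variable {M : Fin r → Matrix A A ℤ} {m : Fin r → ℤ} {j : Fin r} {w g : (Fin r → ℤ) → A}

/-- `g l` is the letter to be placed at `l + e j`. -/
def IsTopLayer (M : Fin r → Matrix A A ℤ) (m : Fin r → ℤ) (j : Fin r)
    (w g : (Fin r → ℤ) → A) : Prop :=
  ∀ l ∈ topFace m j,
    M j (g l) (w l) = 1 ∧ ∀ i, l + evec r i ≤ m → M i (g (l + evec r i)) (g l) = 1

theorem IsTopLayer.eqOn [Fintype A] (hM : ∀ j (a b : A), M j b a = 0 ∨ M j b a = 1)
    (h1a : H1a M) (h1b : H1b M) {g' : (Fin r → ℤ) → A}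
    (hg : IsTopLayer M m j w g) (hg' : IsTopLayer M m j w g') (htop : g m = g' m) :
    Set.EqOn g g' (topFace m j) := by
  refine induction_down m (P := fun l => l ∈ topFace m j → g l = g' l) fun l ih hl => ?_
  by_cases h : ∃ i, l i < m i
  · obtain ⟨i, hi⟩ := h
    have hle := (add_evec_le_iff hl.2.1 i).mpr hi
    refine path_mid_unique hM h1a h1b (ne_of_add_evec_le hl hle) (hg l hl).1
      ((hg l hl).2 i hle) (hg' l hl).1 ?_
    rw [ih i hi (add_evec_mem_topFace hl hle)]
    exact (hg' l hl).2 i hle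
  · simp only [not_exists, not_lt] at h
    rwa [le_antisymm hl.2.1 h]

noncomputable def topLayer (M : Fin r → Matrix A A ℤ) (m : Fin r → ℤ) (j : Fin r)
    (w : (Fin r → ℤ) → A) (a : A) (l : Fin r → ℤ) : A :=
  if h : ∃ i, l i < m i then
    @Classical.epsilon A ⟨a⟩ fun d =>
      M j d (w l) = 1 ∧ M h.choose (topLayer M m j w a (l + evec r h.choose)) d = 1
  else a
termination_by gap m l
decreasing_by exact gap_add_evec_lt h.choose_spec

lemma topLayer_self (M : Fin r → Matrix A A ℤ) (m : Fin r → ℤ) (j : Fin r)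
    (w : (Fin r → ℤ) → A) (a : A) : topLayer M m j w a m = a := by
  rw [topLayer, dif_neg (by simp)]

lemma topLayer_spec {a : A} {l : Fin r → ℤ} (h : ∃ i, l i < m i)
    (hd : ∃ d, M j d (w l) = 1 ∧ M h.choose (topLayer M m j w a (l + evec r h.choose)) d = 1) :
    M j (topLayer M m j w a l) (w l) = 1 ∧
      M h.choose (topLayer M m j w a (l + evec r h.choose)) (topLayer M m j w a l) = 1 := by
  rw [topLayer, dif_pos h]
  exact Classical.epsilon_spec hd

theorem isTopLayer_topLayer [Fintype A] (hM : ∀ j (a b : A), M j b a = 0 ∨ M j b a = 1)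
    (h1a : H1a M) (h1c : H1c M) (hw : IsWord M m w) {a : A} (ha : M j a (w m) = 1) :
    IsTopLayer M m j w (topLayer M m j w a) := by
  refine induction_down m (P := fun l => l ∈ topFace m j → _) fun l ih hl => ?_
  by_cases h : ∃ i, l i < m i
  swap
  · simp only [not_exists, not_lt] at h
    obtain rfl := le_antisymm hl.2.1 h
    refine ⟨by rwa [topLayer_self], fun i hi => ?_⟩
    exact absurd ((add_evec_le_iff le_rfl i).mp hi) (lt_irrefl _)
  set i₀ := h.choose
  have hi₀ : l + evec r i₀ ≤ m := (add_evec_le_iff hl.2.1 i₀).mpr h.choose_spec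
  obtain ⟨ih₀j, ih₀⟩ := ih i₀ h.choose_spec (add_evec_mem_topFace hl hi₀)
  have hdef := topLayer_spec h (exists_path_swap hM h1a (hw.2 l i₀ hl.1 hi₀) ih₀j)
  refine ⟨hdef.1, fun i hi => ?_⟩
  by_cases hii₀ : i = i₀
  · subst hii₀; exact hdef.2
  obtain ⟨ihj, ih'⟩ := ih i ((add_evec_le_iff hl.2.1 i).mp hi) (add_evec_mem_topFace hl hi)
  have hcorner := add_evec_add_evec_le hii₀ hi hi₀
  refine edge_of_cube hM h1a h1c (ne_of_add_evec_le hl hi) hii₀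
    (ne_of_add_evec_le hl hi₀).symm hdef.1 hdef.2 ?_ (hw.2 l i hl.1 hi) ihj (ih' i₀ hcorner)
  rw [add_right_comm] at hcorner ⊢
  exact ih₀ i hcorner

end TopLayer

section Extension

variable {M : Fin r → Matrix A A ℤ} {m : Fin r → ℤ} {j : Fin r} {w g v : (Fin r → ℤ) → A}

def extendTop (m : Fin r → ℤ) (j : Fin r) (w g : (Fin r → ℤ) → A) (x : Fin r → ℤ) : A :=
  if x j ≤ m j then w x else g (x - evec r j)

lemma agreeOn_extendTop : AgreeOn m (extendTop m j w g) w := fun _ _ hx => if_pos (hx j)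

lemma extendTop_add_evec_self : extendTop m j w g (m + evec r j) = g m := by
  simp [extendTop, evec]

theorem isWord_extendTop (hw : IsWord M m w) (hg : IsTopLayer M m j w g) :
    IsWord M (m + evec r j) (extendTop m j w g) := by
  have hm := hw.1
  refine ⟨hm.trans (le_add_of_nonneg_right (evec_nonneg j)), fun l i hl hli => ?_⟩
  have hl_le : l ≤ m + evec r j := (le_add_of_nonneg_right (evec_nonneg i)).trans hli
  by_cases hlow : (l + evec r i) j ≤ m j
  · have hlj : l j ≤ m j := ((le_add_of_nonneg_right (evec_nonneg i) : l ≤ _) j).trans hlow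
    simp only [extendTop, if_pos hlow, if_pos hlj]
    exact hw.2 l i hl (le_of_le_add_evec hli hlow)
  by_cases hij : i = j
  · subst hij
    have hlm : l ≤ m := (add_le_add_iff_right _).mp hli
    have hlj : l i = m i := by
      rw [add_evec_apply, if_pos rfl] at hlow; exact le_antisymm (hlm i) (by omega)
    simp only [extendTop, if_pos (hlm i), if_neg hlow, add_sub_cancel_right]
    exact (hg l ⟨hl, hlm, hlj⟩).1
  · have hlj : ¬ l j ≤ m j := by
      rwa [add_evec_apply, if_neg (Ne.symm hij), add_zero] at hlow
    have hle : l - evec r j + evec r i ≤ m := by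
      rw [sub_add_eq_add_sub, sub_le_iff_le_add]; exact hli
    simp only [extendTop, if_neg hlow, if_neg hlj]
    rw [← sub_add_eq_add_sub]
    exact (hg _ (sub_evec_mem_topFace hm hl hl_le hlj)).2 i hle

theorem isTopLayer_of_isWord (hv : IsWord M (m + evec r j) v) (hvw : AgreeOn m v w) :
    IsTopLayer M m j w (fun l => v (l + evec r j)) := by
  intro l hl
  refine ⟨?_, fun i hi => ?_⟩
  · rw [← hvw l hl.1 hl.2.1]
    exact hv.2 l j hl.1 (add_le_add_left hl.2.1 _)
  · dsimp only
    rw [add_right_comm]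
    exact hv.2 (l + evec r j) i (hl.1.trans (le_add_of_nonneg_right (evec_nonneg j)))
      (by rw [add_right_comm]; exact add_le_add_left hi _)

theorem agreeOn_of_isWord_add_evec [Fintype A]
    (hM : ∀ j (a b : A), M j b a = 0 ∨ M j b a = 1) (h1a : H1a M) (h1b : H1b M) (hm : 0 ≤ m)
    {v' : (Fin r → ℤ) → A}
    (hv : IsWord M (m + evec r j) v) (hvw : AgreeOn m v w)
    (hv' : IsWord M (m + evec r j) v') (hv'w : AgreeOn m v' w)
    (htop : v (m + evec r j) = v' (m + evec r j)) : AgreeOn (m + evec r j) v v' := by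
  intro x hx₀ hx
  by_cases hxj : x j ≤ m j
  · have hxm := le_of_le_add_evec hx hxj
    rw [hvw x hx₀ hxm, hv'w x hx₀ hxm]
  · have hface := sub_evec_mem_topFace hm hx₀ hx hxj
    simpa only [sub_add_cancel] using (isTopLayer_of_isWord hv hvw).eqOn hM h1a h1b
      (isTopLayer_of_isWord hv' hv'w) htop hface

end Extension

theorem stmt_1_general [Fintype A]
    (M : Fin r → Matrix A A ℤ)
    (hM : ∀ j (a b : A), M j b a = 0 ∨ M j b a = 1)
    (h1a : H1a M) (h1b : H1b M) (h1c : H1c M)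
    (j : Fin r) (m : Fin r → ℤ) (w : (Fin r → ℤ) → A) (hw : IsWord M m w)
    (a : A) (ha : M j a (w m) = 1) :
    ∃ v : (Fin r → ℤ) → A,
      (IsWord M (m + evec r j) v ∧ AgreeOn m v w ∧ v (m + evec r j) = a) ∧
      ∀ v' : (Fin r → ℤ) → A, IsWord M (m + evec r j) v' → AgreeOn m v' w →
        v' (m + evec r j) = a → AgreeOn (m + evec r j) v v' := by
  have hv := isWord_extendTop hw (isTopLayer_topLayer hM h1a h1c hw ha)
  have hva : extendTop m j w (topLayer M m j w a) (m + evec r j) = a := by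
    rw [extendTop_add_evec_self, topLayer_self]
  refine ⟨_, ⟨hv, agreeOn_extendTop, hva⟩, fun v' hv' hv'w hv'a => ?_⟩
  exact agreeOn_of_isWord_add_evec hM h1a h1b hw.1 hv agreeOn_extendTop hv' hv'w
    (hva.trans hv'a.symm)

/-- under (H1a), (H1b), (H1c), a word `w ∈ W_m` together with a
letter `a` with `M j a (t w) = 1` extends uniquely to a word `v ∈ W_{m+e_j}`
with `v|[0,m] = w` and `t v = a`. -/
theorem stmt_1 [Fintype A] [Nonempty A] (hr : 0 < r)
    (M : Fin r → Matrix A A ℤ)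
    (hM : ∀ j (a b : A), M j b a = 0 ∨ M j b a = 1)
    (h1a : H1a M) (h1b : H1b M) (h1c : H1c M)
    (j : Fin r) (m : Fin r → ℤ) (w : (Fin r → ℤ) → A) (hw : IsWord M m w)
    (a : A) (ha : M j a (w m) = 1) :
    ∃ v : (Fin r → ℤ) → A,
      (IsWord M (m + evec r j) v ∧ AgreeOn m v w ∧ v (m + evec r j) = a) ∧
      ∀ v' : (Fin r → ℤ) → A, IsWord M (m + evec r j) v' → AgreeOn m v' w →
        v' (m + evec r j) = a → AgreeOn (m + evec r j) v v' :=
  stmt_1_general M hM h1a h1b h1c j m w hw a ha
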